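/- arXiv:math/0701584 — 5 statements merged into one kernel-verified Lean document; each statement's English description precedes it below -/
import Mathlib

section
/- Suppose 0 < |α| ≤ 1/2, δ > 0, and |α|/δ > 1/(2π). Let P = ⌊(1 + |α|δ^{-1})/(2|α|)⌋. Then P ≥ 1 and 2·∑_{k=1}^P sin²(π k α) ≥ δ^{-1}/2, provided δ is sufficiently small. -/
open Real

private lemma tele_cos (θ : ℝ) (P : ℕ) :
    2 * Real.sin θ * ∑ k ∈ Finset.Icc 1 P, Real.cos (2 * k * θ) =
      Real.sin ((2 * P + 1) * θ) - Real.sin θ := by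
  induction P with
  | zero => simp
  | succ n ih =>
    rw [Finset.sum_Icc_succ_top (by norm_num : 1 ≤ n + 1), mul_add, ih]
    have h1 : (2 * ((n : ℝ) + 1) + 1) * θ = 2 * ((n : ℝ) + 1) * θ + θ := by ring
    have h2 : (2 * (n : ℝ) + 1) * θ = 2 * ((n : ℝ) + 1) * θ - θ := by ring
    push_cast
    rw [h1, h2, Real.sin_add, Real.sin_sub]
    ring

/-- If 0 < |α| ≤ 1/2, δ > 0 small enough, |α|/δ > 1/(2π), and
P = ⌊(1 + |α|δ⁻¹)/(2|α|)⌋, then P ≥ 1 and 2∑_{k=1}^P sin²(πkα) ≥ δ⁻¹/2. -/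
theorem sin_sq_sum_delta_bound :
    ∃ δ₀ > (0 : ℝ), ∀ (α δ : ℝ), 0 < |α| → |α| ≤ 1 / 2 → 0 < δ → δ < δ₀ →
      |α| / δ > 1 / (2 * π) →
      1 ≤ ⌊(1 + |α| * δ⁻¹) / (2 * |α|)⌋₊ ∧
      2 * ∑ k ∈ Finset.Icc 1 ⌊(1 + |α| * δ⁻¹) / (2 * |α|)⌋₊,
          Real.sin (π * k * α) ^ 2 ≥ δ⁻¹ / 2 := by
  refine ⟨1, one_pos, ?_⟩
  intro α δ hα hα2 hδ _ _
  set a := |α| with ha_def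
  have ha : 0 < a := hα
  set X := (1 + a * δ⁻¹) / (2 * a) with hX
  have hδi : 0 < δ⁻¹ := by positivity
  have hX1 : 1 ≤ X := by
    rw [hX, le_div_iff₀ (by positivity)]
    nlinarith
  have hP1 : 1 ≤ ⌊X⌋₊ := Nat.one_le_floor_iff X |>.mpr hX1
  refine ⟨hP1, ?_⟩
  set P := ⌊X⌋₊ with hP_def
  set θ := π * α with hθ
  -- lower bound on |sin θ|
  have hπa : π * a ≤ π / 2 := by
    have := Real.pi_pos
    nlinarith
  have hsa : 2 * a ≤ Real.sin (π * a) := by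
    have h := Real.mul_le_sin (x := π * a) (by positivity) hπa
    have hπ := Real.pi_pos
    calc 2 * a = 2 / π * (π * a) := by field_simp
    _ ≤ Real.sin (π * a) := h
  have hsinθ : 2 * a ≤ |Real.sin θ| := by
    have hle : Real.sin (π * a) ≤ |Real.sin θ| := by
      rcases abs_cases α with ⟨h1, _⟩ | ⟨h1, _⟩
      · rw [ha_def, h1, ← hθ]; exact le_abs_self _
      · rw [ha_def, h1, show π * -α = -(π * α) by ring, Real.sin_neg, ← hθ]
        exact neg_le_abs _
    linarith
  have hsθ0 : Real.sin θ ≠ 0 := by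
    intro h
    rw [h, abs_zero] at hsinθ
    nlinarith
  -- rewrite the sum
  have hterm : ∀ k ∈ Finset.Icc 1 P, Real.sin (π * k * α) ^ 2 =
      1 / 2 - Real.cos (2 * k * θ) / 2 := by
    intro k _
    have h1 : 2 * (k : ℝ) * θ = 2 * (π * k * α) := by rw [hθ]; ring
    rw [h1]
    have := Real.sin_sq_add_cos_sq (π * k * α)
    have := Real.cos_two_mul (π * k * α)
    nlinarith
  rw [Finset.sum_congr rfl hterm, Finset.sum_sub_distrib, Finset.sum_const, Nat.card_Icc,
    Nat.add_sub_cancel, nsmul_eq_mul, ← Finset.sum_div]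
  set C := ∑ k ∈ Finset.Icc 1 P, Real.cos (2 * k * θ) with hC
  -- bound on C
  have hE := tele_cos θ P
  rw [← hC] at hE
  have hCP : C = Real.sin ((2 * P + 1) * θ) / (2 * Real.sin θ) - 1 / 2 := by
    field_simp
    linarith [hE]
  have habs : |Real.sin ((2 * P + 1) * θ) / (2 * Real.sin θ)| ≤ 1 / (2 * (2 * a)) := by
    rw [abs_div, abs_mul, abs_two]
    apply div_le_div₀ (by norm_num) (Real.abs_sin_le_one _) (by positivity)
    nlinarith
  have hCle : C ≤ 1 / (4 * a) - 1 / 2 := by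
    have h1 := (abs_le.mp habs).2
    rw [hCP]
    have : (1 : ℝ) / (2 * (2 * a)) = 1 / (4 * a) := by ring_nf
    linarith [this ▸ h1]
  -- floor bound
  have hPX : X - 1 < (P : ℝ) := by
    have := Nat.sub_one_lt_floor X
    exact_mod_cast this
  have hXval : X = 1 / (2 * a) + δ⁻¹ / 2 := by
    rw [hX]
    field_simp
  have h1 : 1 / (2 * a) - 1 / (4 * a) = 1 / (4 * a) := by
    field_simp
    ring
  have h2 : (1 : ℝ) / 2 ≤ 1 / (4 * a) := by
    rw [le_div_iff₀ (by positivity)]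
    linarith
  have key : δ⁻¹ / 2 ≤ (P : ℝ) - C := by linarith
  rw [ge_iff_le]
  linarith [key]
end

section
/- Let n ≥ 1 be a fixed integer, let δ > 0, let b_1,…,b_n ≥ 0, and for real α define φ_n(α) = ∏_{k=1}^n ((1 + e^{-(δ+2πiα)k})/(1 + e^{-δk}))^{b_k} (moduli of the base taken, i.e. consider |φ_n(α)|). Then |φ_n(α)| ≤ exp(-(1/2) ∑_{k=1}^n b_k e^{-kδ} sin²(π α k)). -/
open Real Complex

theorem norm_one_add_mul_exp_mul_I_sq (t θ : ℝ) :
    ‖1 + t * Complex.exp (θ * I)‖ ^ 2 = (1 + t) ^ 2 - 4 * t * Real.sin (θ / 2) ^ 2 := by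
  have hcos : Real.cos θ = 1 - 2 * Real.sin (θ / 2) ^ 2 := by
    rw [show θ = 2 * (θ / 2) by ring, Real.cos_two_mul, mul_div_cancel_left₀ _ two_ne_zero]
    linarith [Real.sin_sq_add_cos_sq (θ / 2)]
  rw [Complex.sq_norm, Complex.normSq_apply]
  simp [Complex.exp_ofReal_mul_I_re, Complex.exp_ofReal_mul_I_im]
  linear_combination 2 * t * hcos + t ^ 2 * Real.sin_sq_add_cos_sq θ

/-- Uses `4 / (1 + t) ^ 2 ≥ 1` for `t ≤ 1`, then `1 - x ≤ exp (-x)`. -/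
theorem sq_sub_le_exp_mul_sq {t s : ℝ} (ht₀ : 0 ≤ t) (ht₁ : t ≤ 1) (hs : 0 ≤ s) :
    (1 + t) ^ 2 - 4 * t * s ≤ (Real.exp (-(1 / 2) * (t * s)) * (1 + t)) ^ 2 := by
  have hexp : 1 - t * s ≤ Real.exp (-(1 / 2) * (t * s)) ^ 2 := by
    rw [sq, ← Real.exp_add, show -(1 / 2) * (t * s) + -(1 / 2) * (t * s) = -(t * s) by ring]
    linarith [Real.add_one_le_exp (-(t * s))]
  have : t * s * (1 + t) ^ 2 ≤ t * s * 4 :=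
    mul_le_mul_of_nonneg_left (by nlinarith) (mul_nonneg ht₀ hs)
  calc (1 + t) ^ 2 - 4 * t * s ≤ (1 - t * s) * (1 + t) ^ 2 := by nlinarith
    _ ≤ Real.exp (-(1 / 2) * (t * s)) ^ 2 * (1 + t) ^ 2 := by gcongr
    _ = _ := by ring

theorem norm_one_add_exp_div_le (δ : ℝ) (hδ : 0 ≤ δ) (α : ℝ) (k : ℕ) :
    ‖1 + Complex.exp (-(↑δ + 2 * ↑π * I * ↑α) * k)‖ / (1 + Real.exp (-δ * k)) ≤
      Real.exp (-(1 / 2) * (Real.exp (-(k : ℝ) * δ) * Real.sin (π * α * k) ^ 2)) := by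
  rw [show -δ * k = -(k : ℝ) * δ by ring]
  set t := Real.exp (-(k : ℝ) * δ)
  have ht₀ : 0 ≤ t := (Real.exp_pos _).le
  have ht₁ : t ≤ 1 := Real.exp_le_one_iff.mpr (by nlinarith [k.cast_nonneg (α := ℝ)])
  have hsplit : Complex.exp (-(↑δ + 2 * ↑π * I * ↑α) * k) =
      t * Complex.exp (↑(-2 * π * α * k) * I) := by
    rw [Complex.ofReal_exp, ← Complex.exp_add]
    push_cast
    ring_nf
  have hnorm := norm_one_add_mul_exp_mul_I_sq t (-2 * π * α * k)
  rw [show -2 * π * α * k / 2 = -(π * α * k) by ring, Real.sin_neg, neg_sq] at hnorm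
  rw [div_le_iff₀ (by positivity), hsplit,
    ← pow_le_pow_iff_left₀ (norm_nonneg _) (by positivity) two_ne_zero, hnorm]
  exact sq_sub_le_exp_mul_sq ht₀ ht₁ (sq_nonneg _)

theorem Real.prod_rpow_le_exp_sum {ι : Type*} (s : Finset ι) {f g b : ι → ℝ}
    (hf₀ : ∀ i ∈ s, 0 ≤ f i) (hfg : ∀ i ∈ s, f i ≤ Real.exp (g i)) (hb : ∀ i ∈ s, 0 ≤ b i) :
    ∏ i ∈ s, f i ^ b i ≤ Real.exp (∑ i ∈ s, b i * g i) := by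
  rw [Real.exp_sum]
  refine Finset.prod_le_prod (fun i hi => Real.rpow_nonneg (hf₀ i hi) _) fun i hi => ?_
  rw [mul_comm, Real.exp_mul]
  exact Real.rpow_le_rpow (hf₀ i hi) (hfg i hi) (hb i hi)

theorem selections_char_fun_bound_general (n : ℕ) (δ : ℝ) (hδ : 0 < δ)
    (b : ℕ → ℝ) (hb : ∀ k, 1 ≤ k → k ≤ n → 0 ≤ b k) (α : ℝ) :
    ∏ k ∈ Finset.Icc 1 n,
        (‖1 + Complex.exp (-(↑δ + 2 * ↑π * I * ↑α) * k)‖ /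
          (1 + Real.exp (-δ * k))) ^ (b k) ≤
      Real.exp (-(1 / 2) *
        ∑ k ∈ Finset.Icc 1 n, b k * Real.exp (-(k : ℝ) * δ) * Real.sin (π * α * k) ^ 2) := by
  have hsum : -(1 / 2) * ∑ k ∈ Finset.Icc 1 n, b k * Real.exp (-(k : ℝ) * δ) *
      Real.sin (π * α * k) ^ 2 = ∑ k ∈ Finset.Icc 1 n,
        b k * (-(1 / 2) * (Real.exp (-(k : ℝ) * δ) * Real.sin (π * α * k) ^ 2)) := by
    rw [Finset.mul_sum]
    exact Finset.sum_congr rfl fun k _ => by ring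
  rw [hsum]
  refine Real.prod_rpow_le_exp_sum _ (fun k _ => by positivity)
    (fun k _ => norm_one_add_exp_div_le δ hδ.le α k) fun k hk => ?_
  rw [Finset.mem_Icc] at hk
  exact hb k hk.1 hk.2

/-- Selections case of Lemma 3: the modulus of the characteristic function is bounded
by exp(-(1/2) ∑_{k=1}^n b_k e^{-kδ} sin²(παk)). -/
theorem selections_char_fun_bound (n : ℕ) (hn : 1 ≤ n) (δ : ℝ) (hδ : 0 < δ)
    (b : ℕ → ℝ) (hb : ∀ k, 1 ≤ k → k ≤ n → 0 ≤ b k) (α : ℝ) :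
    ∏ k ∈ Finset.Icc 1 n,
        (‖1 + Complex.exp (-(↑δ + 2 * ↑π * I * ↑α) * k)‖ /
          (1 + Real.exp (-δ * k))) ^ (b k) ≤
      Real.exp (-(1 / 2) *
        ∑ k ∈ Finset.Icc 1 n, b k * Real.exp (-(k : ℝ) * δ) * Real.sin (π * α * k) ^ 2) :=
  selections_char_fun_bound_general n δ hδ b hb α
end

section
/- Let n ≥ 1, δ > 0, and b_1,…,b_n ≥ 0. Then ∏_{k=1}^n |((1 - e^{-δk})/(1 - e^{-(δ+2πiα)k}))|^{b_k} ≤ exp(-(log 5 / 2) ∑_{k=1}^n b_k e^{-δk} sin²(π α k)) for all real α. -/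
open Real Complex

/-!
Each factor is bounded separately. Writing `E = e^{-δk}` and `S = sin²(παk)`, one has
`|1 - e^{-τk}|² = (1 - E)² + 4ES`, and Bernoulli's inequality `5^y ≤ 1 + 4y` on `[0, 1]`
together with `(1 - E)² ≤ 1` gives `(1 - E)² 5^{ES} ≤ (1 - E)² + 4ES`.
-/

lemma exp_log_five_mul_le {y : ℝ} (hy0 : 0 ≤ y) (hy1 : y ≤ 1) :
    Real.exp (Real.log 5 * y) ≤ 1 + 4 * y := by
  have h := rpow_one_add_le_one_add_mul_self (by norm_num : (-1 : ℝ) ≤ 4) hy0 hy1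
  rw [Real.rpow_def_of_pos (by norm_num)] at h
  norm_num at h
  linarith

lemma norm_one_sub_exp_add_mul_I (x θ : ℝ) :
    ‖1 - Complex.exp (x + 2 * θ * I)‖ =
      √((1 - Real.exp x) ^ 2 + 4 * Real.exp x * Real.sin θ ^ 2) := by
  rw [Complex.norm_def, Complex.exp_add, ← Complex.ofReal_exp, ← Complex.ofReal_ofNat,
    ← Complex.ofReal_mul, Complex.exp_mul_I]
  congr 1
  simp only [Complex.normSq_apply, Complex.sub_re, Complex.sub_im, Complex.one_re,
    Complex.one_im, Complex.mul_re, Complex.mul_im, Complex.add_re, Complex.add_im,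
    Complex.ofReal_re, Complex.ofReal_im, Complex.cos_ofReal_re, Complex.cos_ofReal_im,
    Complex.sin_ofReal_re, Complex.sin_ofReal_im, Complex.I_re, Complex.I_im]
  rw [Real.cos_two_mul', Real.sin_two_mul]
  linear_combination (Real.exp x ^ 2 * (Real.cos θ ^ 2 + 1 + Real.sin θ ^ 2) - 2 * Real.exp x)
    * Real.sin_sq_add_cos_sq θ

lemma one_sub_mul_exp_le_sqrt {E S : ℝ} (hE0 : 0 ≤ E) (hE1 : E ≤ 1) (hS0 : 0 ≤ S)
    (hS1 : S ≤ 1) :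
    (1 - E) * Real.exp (Real.log 5 / 2 * (E * S)) ≤ √((1 - E) ^ 2 + 4 * E * S) := by
  have hES0 : 0 ≤ E * S := mul_nonneg hE0 hS0
  have hES1 : E * S ≤ 1 := mul_le_one₀ hE1 hS0 hS1
  rw [Real.le_sqrt (by positivity) (by nlinarith)]
  calc ((1 - E) * Real.exp (Real.log 5 / 2 * (E * S))) ^ 2
      = (1 - E) ^ 2 * Real.exp (Real.log 5 * (E * S)) := by
        rw [mul_pow, ← Real.exp_nat_mul]; ring_nf
    _ ≤ (1 - E) ^ 2 * (1 + 4 * (E * S)) := by gcongr; exact exp_log_five_mul_le hES0 hES1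
    _ ≤ (1 - E) ^ 2 + 4 * E * S := by
        nlinarith [mul_nonneg hES0 (by nlinarith : 0 ≤ 1 - (1 - E) ^ 2)]

lemma div_norm_one_sub_exp_le {x : ℝ} (hx : 0 ≤ x) (θ : ℝ) :
    (1 - Real.exp (-x)) / ‖1 - Complex.exp (↑(-x) + 2 * θ * I)‖ ≤
      Real.exp (-(Real.log 5 / 2) * (Real.exp (-x) * Real.sin θ ^ 2)) := by
  have hE1 : Real.exp (-x) ≤ 1 := Real.exp_le_one_iff.mpr (by linarith)
  have key := one_sub_mul_exp_le_sqrt (Real.exp_nonneg (-x)) hE1 (sq_nonneg (Real.sin θ))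
    (Real.sin_sq_le_one θ)
  rw [norm_one_sub_exp_add_mul_I]
  refine div_le_of_le_mul₀ (Real.sqrt_nonneg _) (Real.exp_nonneg _) ?_
  set c := Real.log 5 / 2 * (Real.exp (-x) * Real.sin θ ^ 2)
  calc 1 - Real.exp (-x) = Real.exp (-c) * ((1 - Real.exp (-x)) * Real.exp c) := by
        rw [mul_left_comm, ← Real.exp_add, neg_add_cancel, Real.exp_zero, mul_one]
    _ ≤ Real.exp (-(Real.log 5 / 2) * (Real.exp (-x) * Real.sin θ ^ 2)) * _ := by
        rw [neg_mul]; gcongr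

theorem partitions_char_fun_bound_general (n : ℕ) (δ : ℝ) (hδ : 0 < δ)
    (b : ℕ → ℝ) (hb : ∀ k, 1 ≤ k → k ≤ n → 0 ≤ b k) (α : ℝ) :
    ∏ k ∈ Finset.Icc 1 n,
        ((1 - Real.exp (-δ * k)) /
          ‖1 - Complex.exp (-(↑δ + 2 * ↑π * I * ↑α) * k)‖) ^ (b k) ≤
      Real.exp (-(Real.log 5 / 2) *
        ∑ k ∈ Finset.Icc 1 n, b k * Real.exp (-δ * k) * Real.sin (π * α * k) ^ 2) := by
  have hbase : ∀ k : ℕ, 0 ≤ (1 - Real.exp (-δ * k)) /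
      ‖1 - Complex.exp (-(↑δ + 2 * ↑π * I * ↑α) * k)‖ := fun k =>
    div_nonneg (sub_nonneg.mpr (Real.exp_le_one_iff.mpr
      (by nlinarith [k.cast_nonneg' (α := ℝ)]))) (norm_nonneg _)
  rw [Finset.mul_sum, Real.exp_sum]
  refine Finset.prod_le_prod (fun k _ => Real.rpow_nonneg (hbase k) _) (fun k hk => ?_)
  obtain ⟨hk1, hkn⟩ := Finset.mem_Icc.mp hk
  have hexponent :
      -(↑δ + 2 * ↑π * I * ↑α) * (k : ℂ) = ↑(-(δ * k)) + 2 * ↑(-(π * α * k)) * I := by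
    push_cast; ring
  have hfactor := div_norm_one_sub_exp_le (by positivity : 0 ≤ δ * k) (-(π * α * k))
  rw [← hexponent, Real.sin_neg, neg_sq, ← neg_mul] at hfactor
  calc _ ≤ Real.exp (-(Real.log 5 / 2) * (Real.exp (-δ * k) * Real.sin (π * α * k) ^ 2))
          ^ b k := Real.rpow_le_rpow (hbase k) hfactor (hb k hk1 hkn)
    _ = _ := by rw [← Real.exp_mul]; ring_nf

/-- Weighted-partitions case of Lemma 3: the modulus of the characteristic function is
bounded by exp(-(log 5/2) ∑_{k=1}^n b_k e^{-δk} sin²(παk)). -/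
theorem partitions_char_fun_bound (n : ℕ) (hn : 1 ≤ n) (δ : ℝ) (hδ : 0 < δ)
    (b : ℕ → ℝ) (hb : ∀ k, 1 ≤ k → k ≤ n → 0 ≤ b k) (α : ℝ) :
    ∏ k ∈ Finset.Icc 1 n,
        ((1 - Real.exp (-δ * k)) /
          ‖1 - Complex.exp (-(↑δ + 2 * ↑π * I * ↑α) * k)‖) ^ (b k) ≤
      Real.exp (-(Real.log 5 / 2) *
        ∑ k ∈ Finset.Icc 1 n, b k * Real.exp (-δ * k) * Real.sin (π * α * k) ^ 2) :=
  partitions_char_fun_bound_general n δ hδ b hb α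
end

section
/- Let r > 0 and 0 < δ_n → 0 satisfy the asymptotic equation h δ_n^{-(r+1)} + D₀ δ_n^{-1} + O(δ_n^{C₀-1}) + o(1) = n as n → ∞, where h > 0, D₀ ∈ ℝ and 0 < C₀ ≤ 1. Then δ_n = h^{1/(r+1)} n^{-1/(r+1)} + (D₀/(r+1)) n^{-1} + O(n^{-1-β}), where β = C₀/(r+1) if r ≥ C₀ and β = r/(r+1) otherwise. -/
/-!
Write `s := n δ^{r+1} / h - 1` for the relative deviation of `n` from its leading term
`h δ^{-(r+1)}`. Since `C₀ ≤ 1`, the `o(1)` error is absorbed into `O(δ^{C₀-1})`, and the equation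
becomes `s = (D₀/h) δ^r + O(δ^{r+C₀})`; in particular `s → 0` and `δ^{r+1} = O(1/n)`. Exactly,
`h^{1/(r+1)} n^{-1/(r+1)} = δ (1+s)^{-1/(r+1)}` and `1/n = δ^{r+1} (1+s)⁻¹ / h`, so expanding
`(1+s)^{-1/(r+1)}` to second order and `(1+s)⁻¹` to first order leaves an error
`O(δ^{r+1+min C₀ r})`, which is `O(n^{-1-β})`.
-/

open Real Filter Asymptotics Topology

theorem isBigO_sub_sq_of_hasDerivAt {E : Type*} [NormedAddCommGroup E] [NormedSpace ℝ E]
    {f f' : ℝ → E} {x₀ : ℝ} (hf : ∀ᶠ x in 𝓝 x₀, HasDerivAt f (f' x) x)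
    (hf' : f' =O[𝓝 x₀] fun x => x - x₀) :
    (fun x => f x - f x₀) =O[𝓝 x₀] fun x => (x - x₀) ^ 2 := by
  obtain ⟨c, hc0, hc⟩ := hf'.exists_pos
  obtain ⟨ε, hε, hball⟩ := Metric.eventually_nhds_iff_ball.1 (hf.and hc.bound)
  refine IsBigO.of_bound c ?_
  filter_upwards [Metric.ball_mem_nhds x₀ hε] with x hx
  have hsub : Metric.closedBall x₀ (dist x x₀) ⊆ Metric.ball x₀ ε :=
    Metric.closedBall_subset_ball hx
  have hmvt := (convex_closedBall x₀ (dist x x₀)).norm_image_sub_le_of_norm_hasDerivWithin_le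
    (fun y hy => (hball y (hsub hy)).1.hasDerivWithinAt)
    (fun y hy => (hball y (hsub hy)).2.trans
      (mul_le_mul_of_nonneg_left (by simpa [← dist_eq_norm] using hy) hc0.le))
    (Metric.mem_closedBall_self dist_nonneg) (Metric.mem_closedBall.2 le_rfl)
  simpa [dist_eq_norm, norm_pow, sq, mul_assoc] using hmvt

theorem one_add_rpow_sub_one_isBigO (q : ℝ) :
    (fun x : ℝ => (1 + x) ^ q - 1) =O[𝓝 0] fun x => x := by
  have hd : HasDerivAt (fun x : ℝ => (1 + x) ^ q) (1 * q * (1 + 0) ^ (q - 1)) 0 :=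
    ((hasDerivAt_id 0).const_add 1).rpow_const (p := q) (Or.inl (by norm_num))
  simpa using hd.isBigO_sub

theorem one_add_rpow_sub_one_sub_mul_isBigO (q : ℝ) :
    (fun x : ℝ => (1 + x) ^ q - 1 - q * x) =O[𝓝 0] fun x => x ^ 2 := by
  have hderiv : ∀ᶠ x : ℝ in 𝓝 0, HasDerivAt (fun x => (1 + x) ^ q - 1 - q * x)
      (q * ((1 + x) ^ (q - 1) - 1)) x := by
    filter_upwards [eventually_gt_nhds (show (-1 : ℝ) < 0 by norm_num)] with x hx
    have hpow := ((hasDerivAt_id' x).const_add 1).rpow_const (p := q) (Or.inl (by linarith))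
    exact ((hpow.sub_const 1).sub ((hasDerivAt_id' x).const_mul q)).congr_deriv (by ring)
  simpa using isBigO_sub_sq_of_hasDerivAt hderiv
    (by simpa using (one_add_rpow_sub_one_isBigO (q - 1)).const_mul_left q)

theorem rpow_one_div_mul_rpow_neg_one_div_eq {N δ h p : ℝ} (hN : 0 < N) (hδ : 0 < δ)
    (hh : 0 < h) (hp : p ≠ 0) :
    h ^ (1 / p) * N ^ (-1 / p) = δ * (N * δ ^ p / h) ^ (-(1 / p)) := by
  rw [div_rpow (by positivity) hh.le, mul_rpow hN.le (by positivity), ← rpow_mul hδ.le,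
    mul_neg, mul_one_div_cancel hp, rpow_neg_one, rpow_neg hh.le, neg_div]
  field_simp

section Sequences

variable {ι : Type*} {l : Filter ι}

theorem isBigO_rpow_rpow_of_tendsto_zero {u : ι → ℝ} (hu : Tendsto u l (𝓝 0))
    (hpos : ∀ i, 0 < u i) {a b : ℝ} (hab : a ≤ b) :
    (fun i => u i ^ b) =O[l] fun i => u i ^ a := by
  refine IsBigO.of_bound 1 ?_
  filter_upwards [hu.eventually (eventually_le_nhds one_pos)] with i hi
  rw [one_mul, norm_of_nonneg (rpow_nonneg (hpos i).le _),
    norm_of_nonneg (rpow_nonneg (hpos i).le _)]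
  exact rpow_le_rpow_of_exponent_ge (hpos i) hi hab

theorem isBigO_mul_rpow_add {u f g : ι → ℝ} {a b : ℝ} (hu : ∀ i, 0 < u i)
    (hf : f =O[l] fun i => u i ^ a) (hg : g =O[l] fun i => u i ^ b) :
    (fun i => f i * g i) =O[l] fun i => u i ^ (a + b) :=
  (hf.mul hg).congr_right fun i => (rpow_add (hu i) a b).symm

theorem rpow_isBigO_rpow_neg_div {u N : ι → ℝ} {p q : ℝ} (hp : 0 < p) (hq : 0 ≤ q)
    (hu : ∀ i, 0 ≤ u i) (hN : ∀ᶠ i in l, 0 < N i)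
    (h : (fun i => u i ^ p) =O[l] fun i => (N i)⁻¹) :
    (fun i => u i ^ q) =O[l] fun i => N i ^ (-(q / p)) := by
  refine (h.rpow (div_nonneg hq hp.le) (hN.mono fun i hi => (inv_pos.2 hi).le)).congr'
    (Eventually.of_forall fun i => ?_) (hN.mono fun i hi => ?_)
  · simp only [← rpow_mul (hu i), mul_div_cancel₀ _ hp.ne']
  · simp only [inv_rpow hi.le, rpow_neg hi.le]

theorem eventually_pos_of_tendsto_mul_div_sub_one {N u : ι → ℝ} {h : ℝ} (hh : 0 < h)
    (hu : ∀ i, 0 < u i) (hs0 : Tendsto (fun i => N i * u i / h - 1) l (𝓝 0)) :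
    ∀ᶠ i in l, 0 < N i := by
  filter_upwards [hs0.eventually (eventually_gt_nhds neg_one_lt_zero)] with i hi
  have : 0 < N i * u i / h := by linarith
  exact (mul_pos_iff_of_pos_right (hu i)).1 ((div_pos_iff_of_pos_right hh).1 this)

theorem isBigO_inv_of_tendsto_mul_div_sub_one {N u : ι → ℝ} {h : ℝ} (hh : h ≠ 0)
    (hN : ∀ᶠ i in l, 0 < N i) (hs0 : Tendsto (fun i => N i * u i / h - 1) l (𝓝 0)) :
    u =O[l] fun i => (N i)⁻¹ := by
  refine ((((hs0.const_add 1).isBigO_one ℝ).const_mul_left h).mul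
    (isBigO_refl (fun i => (N i)⁻¹) l)).congr' ?_ (Eventually.of_forall fun i => one_mul _)
  filter_upwards [hN] with i hi
  field_simp
  ring

variable {δ : ι → ℝ}

theorem isBigO_rescaled_remainder {N e : ι → ℝ} {r h D₀ C₀ : ℝ} (hh : h ≠ 0)
    (hδ : ∀ i, 0 < δ i) (he : e =O[l] fun i => δ i ^ (C₀ - 1))
    (heq : ∀ i, h * δ i ^ (-(r + 1)) + D₀ * (δ i)⁻¹ + e i = N i) :
    (fun i => N i * δ i ^ (r + 1) / h - 1 - D₀ / h * δ i ^ r) =O[l]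
      fun i => δ i ^ (r + C₀) := by
  have hid : ∀ i, N i * δ i ^ (r + 1) / h - 1 - D₀ / h * δ i ^ r
      = h⁻¹ * (e i * δ i ^ (r + 1)) := by
    intro i
    have := (hδ i).ne'
    have := (rpow_pos_of_pos (hδ i) r).ne'
    rw [← heq i, rpow_neg (hδ i).le, rpow_add_one (hδ i).ne']
    field_simp
    ring
  rw [show r + C₀ = C₀ - 1 + (r + 1) by ring]
  exact ((isBigO_mul_rpow_add hδ he (isBigO_refl _ l)).const_mul_left h⁻¹).congr_left
    fun i => (hid i).symm

/-- The three pieces are the second-order Taylor remainder of `(1+s)^{-1/(r+1)}`, the error in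
`s ≈ a δ^r`, and the first-order remainder of `(1+s)⁻¹`. -/
theorem isBigO_inversion_remainder {s : ι → ℝ} {a r C₀ : ℝ} (hδ : ∀ i, 0 < δ i)
    (hδ0 : Tendsto δ l (𝓝 0)) (hs0 : Tendsto s l (𝓝 0)) (hs : s =O[l] fun i => δ i ^ r)
    (hsa : (fun i => s i - a * δ i ^ r) =O[l] fun i => δ i ^ (r + C₀)) :
    (fun i => δ i - δ i * (1 + s i) ^ (-(1 / (r + 1)))
        - a / (r + 1) * δ i ^ (r + 1) * (1 + s i)⁻¹) =O[l]
      fun i => δ i ^ (r + 1 + min C₀ r) := by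
  have hδ1 : δ =O[l] fun i => δ i ^ (1 : ℝ) := by simp [isBigO_refl]
  have hss : (fun i => s i ^ 2) =O[l] fun i => δ i ^ (r + r) := by
    simpa only [sq] using isBigO_mul_rpow_add hδ hs hs
  have h₁ := isBigO_mul_rpow_add hδ hδ1
    (((one_add_rpow_sub_one_sub_mul_isBigO (-(1 / (r + 1)))).comp_tendsto hs0).trans hss)
  have h₂ := isBigO_mul_rpow_add hδ hδ1 hsa
  have h₃ := isBigO_mul_rpow_add hδ (isBigO_refl (fun i => δ i ^ (r + 1)) l)
    (((one_add_rpow_sub_one_isBigO (-1)).comp_tendsto hs0).trans hs)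
  have hlow : ∀ {c : ℝ}, r + 1 + min C₀ r ≤ c →
      (fun i => δ i ^ c) =O[l] fun i => δ i ^ (r + 1 + min C₀ r) :=
    fun hc => isBigO_rpow_rpow_of_tendsto_zero hδ0 hδ hc
  refine (((h₁.trans (hlow ?_)).neg_left.add
    ((h₂.trans (hlow ?_)).const_mul_left (1 / (r + 1)))).sub
    ((h₃.trans (hlow ?_)).const_mul_left (a / (r + 1)))).congr_left fun i => ?_
  · linarith [min_le_right C₀ r]
  · linarith [min_le_left C₀ r]
  · linarith [min_le_right C₀ r]
  · have : δ i ^ (r + 1) = δ i * δ i ^ r := by rw [rpow_add_one (hδ i).ne', mul_comm]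
    simp only [Function.comp, rpow_neg_one, this]
    ring

theorem isBigO_sub_two_term_expansion {N e : ι → ℝ} {r h D₀ C₀ : ℝ} (hr : 0 < r)
    (hh : 0 < h) (hC₀ : 0 ≤ C₀) (hδ : ∀ i, 0 < δ i) (hδ0 : Tendsto δ l (𝓝 0))
    (he : e =O[l] fun i => δ i ^ (C₀ - 1))
    (heq : ∀ i, h * δ i ^ (-(r + 1)) + D₀ * (δ i)⁻¹ + e i = N i) :
    (fun i => δ i - h ^ (1 / (r + 1)) * N i ^ (-1 / (r + 1)) - D₀ / (r + 1) * (N i)⁻¹) =O[l]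
      fun i => N i ^ (-1 - min C₀ r / (r + 1)) := by
  set s : ι → ℝ := fun i => N i * δ i ^ (r + 1) / h - 1 with hs_def
  have hsa : (fun i => s i - D₀ / h * δ i ^ r) =O[l] fun i => δ i ^ (r + C₀) :=
    isBigO_rescaled_remainder hh.ne' hδ he heq
  have hs : s =O[l] fun i => δ i ^ r :=
    ((hsa.trans (isBigO_rpow_rpow_of_tendsto_zero hδ0 hδ (by linarith))).add
      ((isBigO_refl _ l).const_mul_left (D₀ / h))).congr_left fun i => by ring
  have hs0 : Tendsto s l (𝓝 0) := hs.trans_tendsto (by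
    simpa [Function.comp_def, zero_rpow hr.ne'] using
      (continuousAt_rpow_const 0 r (Or.inr hr.le)).tendsto.comp hδ0)
  have hN : ∀ᶠ i in l, 0 < N i :=
    eventually_pos_of_tendsto_mul_div_sub_one hh (fun i => rpow_pos_of_pos (hδ i) _) hs0
  have hδN : (fun i => δ i ^ (r + 1)) =O[l] fun i => (N i)⁻¹ :=
    isBigO_inv_of_tendsto_mul_div_sub_one hh.ne' hN hs0
  have hid : (fun i => δ i - h ^ (1 / (r + 1)) * N i ^ (-1 / (r + 1)) - D₀ / (r + 1) * (N i)⁻¹)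
      =ᶠ[l] fun i => δ i - δ i * (1 + s i) ^ (-(1 / (r + 1)))
        - D₀ / h / (r + 1) * δ i ^ (r + 1) * (1 + s i)⁻¹ := by
    filter_upwards [hN] with i hi
    have := (rpow_pos_of_pos (hδ i) (r + 1)).ne'
    simp only [hs_def, add_sub_cancel,
      rpow_one_div_mul_rpow_neg_one_div_eq hi (hδ i) hh (by linarith : r + 1 ≠ 0)]
    field_simp
  have hconv := rpow_isBigO_rpow_neg_div (q := r + 1 + min C₀ r) (by linarith)
    (by positivity) (fun i => (hδ i).le) hN hδN
  refine hid.trans_isBigO ((isBigO_inversion_remainder hδ hδ0 hs0 hs hsa).trans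
    (hconv.congr_right fun i => ?_))
  congr 1
  field_simp
  ring

end Sequences

/-- Asymptotic inversion of the equation
h δ_n^{-(r+1)} + D₀ δ_n^{-1} + O(δ_n^{C₀-1}) + o(1) = n, giving the two-term
expansion of δ_n with error O(n^{-1-β}). -/
theorem delta_n_asymptotic_expansion (r h D₀ C₀ : ℝ) (hr : 0 < r) (hh : 0 < h)
    (hC₀ : 0 < C₀) (hC₀' : C₀ ≤ 1) (δ : ℕ → ℝ) (hδpos : ∀ n, 0 < δ n)
    (hδ0 : Tendsto δ atTop (nhds 0))
    (e₁ e₂ : ℕ → ℝ)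
    (he₁ : e₁ =O[atTop] fun n => (δ n) ^ (C₀ - 1))
    (he₂ : Tendsto e₂ atTop (nhds 0))
    (heq : ∀ n : ℕ, h * (δ n) ^ (-(r + 1)) + D₀ * (δ n)⁻¹ + e₁ n + e₂ n = n) :
    (fun n : ℕ => δ n - h ^ (1 / (r + 1)) * (n : ℝ) ^ (-1 / (r + 1))
        - (D₀ / (r + 1)) * (n : ℝ)⁻¹) =O[atTop]
      fun n : ℕ => (n : ℝ) ^ (-1 - (if C₀ ≤ r then C₀ / (r + 1) else r / (r + 1))) := by
  have hone : (fun _ : ℕ => (1 : ℝ)) =O[atTop] fun n => δ n ^ (C₀ - 1) := by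
    simpa using isBigO_rpow_rpow_of_tendsto_zero hδ0 hδpos (by linarith : C₀ - 1 ≤ 0)
  have he : (fun n => e₁ n + e₂ n) =O[atTop] fun n => δ n ^ (C₀ - 1) :=
    he₁.add ((he₂.isBigO_one ℝ).trans hone)
  have := isBigO_sub_two_term_expansion (N := fun n : ℕ => (n : ℝ)) (D₀ := D₀) hr hh hC₀.le
    hδpos hδ0 he fun n => by rw [← heq n]; ring
  simpa only [min_def, apply_ite (· / (r + 1))] using this
end

section
/- Suppose b_k = o(k^r) for some r > 0, and let δ̂_n = n^{-(r+2)/(2(r+1))}. Then ∑_{k=n+1}^∞ k b_k e^{-k δ̂_n}/(1 - e^{-k δ̂_n}) → 0 as n → ∞. -/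
open Real Filter Asymptotics
open scoped Nat Topology

/-!
For `k > n` we have `k δ ≥ n δ ≥ 1` (here `δ = n ^ e` with `-1 < e`), so every denominator
`1 - exp (-k δ)` exceeds `1 / 2`, and since `b k = O(k ^ r)` the `k`-th term is at most
`2 k ^ m exp (-k δ)` with `m = ⌈r + 1⌉`. Of the two halves of `exp (-k δ)`, one is at most
`exp (-(n + 1) δ / 2)` and the other makes the sum over all `k` converge:
`∑ k ^ m exp (-k δ / 2) ≤ exp (δ / 2) m! (2 / δ) ^ (m + 1)`. The tail is therefore
`O(δ⁻¹ ^ (m + 1) exp (-n δ / 2))`, a power of `n` times `exp (-n ^ (1 + e) / 2)`,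
which tends to `0`.
-/

lemma tsum_pow_mul_exp_neg_mul_le (m : ℕ) {c : ℝ} (hc : 0 < c) :
    ∑' k : ℕ, (k : ℝ) ^ m * exp (-(c * k)) ≤ exp c * m ! / c ^ (m + 1) :=
  Real.tsum_le_of_sum_range_le (fun _ => by positivity) fun M => by
    rw [Finset.range_eq_Ico]
    exact sum_Ico_pow_mul_exp_neg_le hc

lemma summable_pow_mul_exp_neg_mul (m : ℕ) {c : ℝ} (hc : 0 < c) :
    Summable fun k : ℕ => (k : ℝ) ^ m * exp (-(c * k)) := by
  simpa only [neg_mul] using Real.summable_pow_mul_exp_neg_nat_mul m hc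

lemma tendsto_rpow_mul_exp_neg_mul_rpow_atTop_nhds_zero (p : ℝ) {q c : ℝ} (hq : 0 < q)
    (hc : 0 < c) : Tendsto (fun x : ℝ => x ^ p * exp (-c * x ^ q)) atTop (𝓝 0) := by
  refine ((tendsto_rpow_mul_exp_neg_mul_atTop_nhds_zero (p / q) c hc).comp
    (tendsto_rpow_atTop hq)).congr' ?_
  filter_upwards [eventually_gt_atTop 0] with x hx
  simp only [Function.comp_apply, ← rpow_mul hx.le, mul_div_cancel₀ p hq.ne']

lemma norm_mul_mul_exp_div_one_sub_exp_le {x β δ r : ℝ} {m : ℕ} (hx : 1 ≤ x)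
    (hxδ : 1 ≤ x * δ) (hβ : |β| ≤ x ^ r) (hrm : r + 1 ≤ m) :
    ‖x * β * exp (-x * δ) / (1 - exp (-x * δ))‖ ≤ 2 * (x ^ m * exp (-x * δ)) := by
  have hexp : exp (-x * δ) < 1 / 2 :=
    (exp_le_exp.2 (by linarith)).trans_lt exp_neg_one_lt_half
  have hxβ : |x * β| ≤ x ^ m := calc
    |x * β| ≤ x * x ^ r := by
      rw [abs_mul, abs_of_nonneg (by linarith)]; gcongr
    _ = x ^ (r + 1) := by rw [rpow_add_one (by positivity), mul_comm]
    _ ≤ x ^ m := by exact_mod_cast rpow_le_rpow_of_exponent_le hx hrm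
  have hexp0 := exp_pos (-x * δ)
  have hden : 0 < 1 - exp (-x * δ) := by linarith
  rw [norm_div, norm_mul, Real.norm_of_nonneg hexp0.le, Real.norm_of_nonneg hden.le,
    div_le_iff₀ hden]
  calc ‖x * β‖ * exp (-x * δ) ≤ x ^ m * exp (-x * δ) := by gcongr; exact hxβ
    _ ≤ 2 * (x ^ m * exp (-x * δ)) * (1 - exp (-x * δ)) := by
      have : 0 ≤ x ^ m * exp (-x * δ) := by positivity
      nlinarith

lemma norm_tsum_tail_le {b : ℕ → ℝ} {r δ : ℝ} {m n : ℕ} (hrm : r + 1 ≤ m) (hδ : 0 < δ)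
    (hnδ : 1 ≤ n * δ) (hb : ∀ k, n < k → |b k| ≤ (k : ℝ) ^ r) :
    ‖∑' j : ℕ, ((j + n + 1 : ℕ) : ℝ) * b (j + n + 1) * exp (-((j + n + 1 : ℕ) : ℝ) * δ)
        / (1 - exp (-((j + n + 1 : ℕ) : ℝ) * δ))‖
      ≤ 2 * m ! * 2 ^ (m + 1) * (δ⁻¹ ^ (m + 1) * exp (-(n * δ / 2))) := by
  set c := δ / 2 with hc
  have hc0 : 0 < c := by positivity
  set h : ℕ → ℝ := fun k => (k : ℝ) ^ m * exp (-(c * k))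
  have hs : Summable h := summable_pow_mul_exp_neg_mul m hc0
  have hterm : ∀ k : ℕ, n < k → ‖(k : ℝ) * b k * exp (-(k : ℝ) * δ) / (1 - exp (-(k : ℝ) * δ))‖
      ≤ 2 * exp (-(c * (n + 1))) * h k := by
    intro k hk
    have hk1 : (n : ℝ) + 1 ≤ k := by exact_mod_cast hk
    refine (norm_mul_mul_exp_div_one_sub_exp_le (by linarith) ?_ (hb k hk) hrm).trans ?_
    · nlinarith
    · calc 2 * ((k : ℝ) ^ m * exp (-k * δ)) = 2 * exp (-(c * k)) * h k := by
            rw [show -k * δ = -(c * k) + -(c * k) by ring, exp_add]; ring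
        _ ≤ 2 * exp (-(c * (n + 1))) * h k := by gcongr
  calc _ ≤ ∑' j : ℕ, 2 * exp (-(c * (n + 1))) * h (j + (n + 1)) :=
        tsum_of_norm_bounded ((hs.comp_injective (add_left_injective (n + 1))).mul_left _).hasSum
          fun j => hterm _ (by omega)
    _ ≤ 2 * exp (-(c * (n + 1))) * (exp c * m ! / c ^ (m + 1)) := by
        rw [tsum_mul_left]
        gcongr
        exact (tsum_comp_le_tsum_of_inj hs (fun _ => by positivity)
          (add_left_injective (n + 1))).trans (tsum_pow_mul_exp_neg_mul_le m hc0)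
    _ = 2 * m ! * 2 ^ (m + 1) * (δ⁻¹ ^ (m + 1) * exp (-(n * δ / 2))) := by
        have : exp (-(c * (n + 1))) = exp (-(n * δ / 2)) * (exp c)⁻¹ := by
          rw [← exp_neg, ← exp_add]; congr 1; ring
        rw [this, hc]
        field_simp
        rw [← mul_pow, ← mul_pow, show δ / 2 * 2 * (1 / δ) = 1 by field_simp, one_pow]

lemma tendsto_inv_rpow_pow_mul_exp_neg {e : ℝ} (he : -1 < e) (k : ℕ) :
    Tendsto (fun n : ℕ => ((n : ℝ) ^ e)⁻¹ ^ k * exp (-(n * (n : ℝ) ^ e / 2))) atTop (𝓝 0) := by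
  refine ((tendsto_rpow_mul_exp_neg_mul_rpow_atTop_nhds_zero (-e * k) (by linarith : 0 < 1 + e)
    one_half_pos).comp tendsto_natCast_atTop_atTop).congr' ?_
  filter_upwards [eventually_gt_atTop 0] with n hn
  have hn : (0 : ℝ) < n := by exact_mod_cast hn
  simp only [Function.comp_apply]
  rw [← rpow_neg hn.le, ← rpow_natCast, ← rpow_mul hn.le, rpow_add hn, rpow_one]
  congr 2
  ring

theorem tail_sum_tendsto_zero_general (b : ℕ → ℝ) (r : ℝ) (hr : 0 < r)
    (ho : (fun k : ℕ => b k) =o[atTop] fun k : ℕ => (k : ℝ) ^ r) :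
    Tendsto (fun n : ℕ =>
        ∑' j : ℕ, ((j + n + 1 : ℕ) : ℝ) * b (j + n + 1)
            * Real.exp (-((j + n + 1 : ℕ) : ℝ) * (n : ℝ) ^ (-(r + 2) / (2 * (r + 1))))
            / (1 - Real.exp (-((j + n + 1 : ℕ) : ℝ) * (n : ℝ) ^ (-(r + 2) / (2 * (r + 1))))))
      atTop (nhds 0) := by
  obtain ⟨N, hN⟩ : ∃ N, ∀ k ≥ N, |b k| ≤ (k : ℝ) ^ r := by
    obtain ⟨N, hN⟩ := eventually_atTop.1 (ho.bound one_pos)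
    refine ⟨N, fun k hk => ?_⟩
    simpa [abs_of_nonneg (rpow_nonneg k.cast_nonneg r)] using hN k hk
  set e := -(r + 2) / (2 * (r + 1))
  have he : -1 < e := by rw [lt_div_iff₀ (by positivity)]; linarith
  set m := ⌈r + 1⌉₊
  have hbound :=
    (tendsto_inv_rpow_pow_mul_exp_neg he (m + 1)).const_mul (2 * (m ! : ℝ) * 2 ^ (m + 1))
  rw [mul_zero] at hbound
  refine squeeze_zero_norm' ?_ hbound
  filter_upwards [eventually_gt_atTop N] with n hn
  have hn1 : (1 : ℝ) ≤ n := by exact_mod_cast Nat.one_le_of_lt hn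
  refine norm_tsum_tail_le (Nat.le_ceil _) (rpow_pos_of_pos (by linarith) e) ?_
    fun k hk => hN k (by omega)
  calc (1 : ℝ) ≤ n ^ (1 + e) := one_le_rpow hn1 (by linarith)
    _ = n * n ^ e := by rw [rpow_add (by linarith), rpow_one]

/-- Tail estimate (eng): if b_k = o(k^r) and δ̂_n = n^{-(r+2)/(2(r+1))}, then
∑_{k=n+1}^∞ k b_k e^{-kδ̂_n}/(1 - e^{-kδ̂_n}) → 0 as n → ∞. -/
theorem tail_sum_tendsto_zero (b : ℕ → ℝ) (hb : ∀ k, 0 ≤ b k) (r : ℝ) (hr : 0 < r)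
    (ho : (fun k : ℕ => b k) =o[atTop] fun k : ℕ => (k : ℝ) ^ r) :
    Tendsto (fun n : ℕ =>
        ∑' j : ℕ, ((j + n + 1 : ℕ) : ℝ) * b (j + n + 1)
            * Real.exp (-((j + n + 1 : ℕ) : ℝ) * (n : ℝ) ^ (-(r + 2) / (2 * (r + 1))))
            / (1 - Real.exp (-((j + n + 1 : ℕ) : ℝ) * (n : ℝ) ^ (-(r + 2) / (2 * (r + 1))))))
      atTop (nhds 0) :=
  tail_sum_tendsto_zero_general b r hr ho
end
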